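/- arXiv:1701.05895 — 3 statements merged into one kernel-verified Lean document; each statement's English description precedes it below -/
import Mathlib

section
/- Let θ be a real number and let S = ℤ + θℤ denote the additive subgroup of ℝ generated by 1 and θ, equipped with the order induced from ℝ. If h : S → S is an additive group homomorphism that is positive (i.e., for every z ∈ S with 0 ≤ z one has 0 ≤ h(z)), then h is a multiple of the identity: for every z ∈ S, h(z) = h(1)·z. -/
/-!
A positive additive map `f` on a subgroup of `ℝ` containing `1` is monotone, so the integer
inequalities `m ≤ n z ≤ m + 1` (with `m = ⌊n z⌋`) are carried to `m a ≤ n f(z) ≤ (m + 1) a`,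
where `a = f(1)`. As `n a z` lies in the same interval, `n |f(z) - a z| ≤ a` for every `n`,
which forces `f(z) = a z` by the Archimedean property.
-/

theorem eq_zero_of_forall_nsmul_abs_le {α : Type*} [AddCommGroup α] [LinearOrder α]
    [IsOrderedAddMonoid α] [Archimedean α] {x C : α} (h : ∀ n : ℕ, n • |x| ≤ C) : x = 0 := by
  by_contra hx
  obtain ⟨n, hn⟩ := Archimedean.arch (C + |x|) (abs_pos.mpr hx)
  exact not_le.mpr (lt_add_of_pos_right C (abs_pos.mpr hx)) (hn.trans (h n))

namespace AddSubgroup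

variable {G : AddSubgroup ℝ} {f : G →+ ℝ} {one : G}

theorem intCast_mul_map_one_le {p q : ℤ} {z : G} (hf : ∀ z : G, 0 ≤ (z : ℝ) → 0 ≤ f z)
    (hone : (one : ℝ) = 1) (hpq : (p : ℝ) ≤ q * z) : p * f one ≤ q * f z := by
  have hle : p • one ≤ q • z := by
    change ((p • one : G) : ℝ) ≤ ((q • z : G) : ℝ)
    simpa [hone] using hpq
  simpa using (monotone_iff_map_nonneg f).mpr hf hle

theorem abs_natCast_mul_map_sub_le {n : ℕ} (z : G) (hf : ∀ z : G, 0 ≤ (z : ℝ) → 0 ≤ f z)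
    (hone : (one : ℝ) = 1) : n * |f z - f one * z| ≤ f one := by
  set m := ⌊(n : ℝ) * z⌋
  have hm_le : (m : ℝ) ≤ n * z := Int.floor_le _
  have hm_succ : (n : ℝ) * z ≤ m + 1 := (Int.lt_floor_add_one _).le
  have ha : 0 ≤ f one := hf one (by rw [hone]; exact zero_le_one)
  have lower := intCast_mul_map_one_le hf hone (q := n) (by exact_mod_cast hm_le)
  have upper := intCast_mul_map_one_le hf hone (p := -(m + 1)) (q := -n) (z := z)
    (by push_cast; linarith)
  push_cast at lower upper
  have key := abs_sub_le_of_le_of_le (a := n * f z) (b := n * (f one * z))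
    (lb := m * f one) (ub := (m + 1) * f one) lower (by linarith)
    (by linarith [mul_le_mul_of_nonneg_right hm_le ha])
    (by linarith [mul_le_mul_of_nonneg_right hm_succ ha])
  rw [← mul_sub, abs_mul, Nat.abs_cast] at key
  linarith

theorem map_eq_map_one_mul_of_map_nonneg (hf : ∀ z : G, 0 ≤ (z : ℝ) → 0 ≤ f z)
    (hone : (one : ℝ) = 1) (z : G) : f z = f one * z :=
  sub_eq_zero.mp <| eq_zero_of_forall_nsmul_abs_le fun n => by
    simpa [nsmul_eq_mul] using abs_natCast_mul_map_sub_le z hf hone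

end AddSubgroup

theorem positive_hom_of_int_add_theta_int_is_mul_identity_general
    (S : AddSubgroup ℝ)
    (h : S →+ S)
    (hpos : ∀ z : S, 0 ≤ (z : ℝ) → 0 ≤ (h z : ℝ))
    (one : S) (hone : (one : ℝ) = 1) :
    ∀ z : S, (h z : ℝ) = (h one : ℝ) * (z : ℝ) :=
  AddSubgroup.map_eq_map_one_mul_of_map_nonneg (f := S.subtype.comp h) hpos hone

/-- **Lemma 6.1.** Let `θ` be a real number and `S = ℤ + θℤ` the additive subgroup of `ℝ`
generated by `1` and `θ`, with the order induced from `ℝ`. Every positive additive group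
homomorphism `h : S → S` is a multiple of the identity: `h z = h 1 * z` for all `z ∈ S`. -/
theorem positive_hom_of_int_add_theta_int_is_mul_identity
    (θ : ℝ) (S : AddSubgroup ℝ) (hS : S = AddSubgroup.closure ({1, θ} : Set ℝ))
    (h : S →+ S)
    (hpos : ∀ z : S, 0 ≤ (z : ℝ) → 0 ≤ (h z : ℝ))
    (one : S) (hone : (one : ℝ) = 1) :
    ∀ z : S, (h z : ℝ) = (h one : ℝ) * (z : ℝ) :=
  positive_hom_of_int_add_theta_int_is_mul_identity_general S h hpos one hone
end

section
/- Let θ be an irrational real number that is non-quadratic, i.e., for all integers a, b, c, if a·θ² + b·θ + c = 0 then a = b = c = 0. Let S = ℤ + θℤ be the additive subgroup of ℝ generated by 1 and θ, and let h : S → S be a positive additive group homomorphism (0 ≤ z implies 0 ≤ h(z) for z ∈ S). Then h(1) is a nonnegative integer: there exists n ∈ ℕ with h(1) = n. -/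
/-!
A positive homomorphism `h` of `ℤ + θℤ` is monotone, so comparing `h θ` with `h` of rational
approximations of `θ` forces `h θ = h 1 · θ`; in particular `h 1` and `h 1 · θ` both lie in
`ℤ + θℤ`. Writing `h 1 = p + qθ`, the relation `(p + qθ) θ ∈ ℤ + θℤ` is a quadratic equation
for `θ` with leading coefficient `q`, so `q = 0` when `θ` is non-quadratic.
-/

lemma eq_mul_of_rat_bounds {θ c d : ℝ} (hc : 0 ≤ c)
    (hlt : ∀ r : ℚ, (r : ℝ) < θ → r * c ≤ d) (hgt : ∀ r : ℚ, θ < r → d ≤ r * c) :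
    d = c * θ := by
  rcases hc.eq_or_lt with rfl | hc
  · obtain ⟨r, hr⟩ := exists_rat_lt θ
    obtain ⟨s, hs⟩ := exists_rat_gt θ
    linarith [hlt r hr, hgt s hs]
  · have hle : θ ≤ d / c :=
      le_of_forall_rat_lt_imp_le fun r hr => (le_div_iff₀ hc).2 (hlt r hr)
    have hge : d / c ≤ θ :=
      le_of_forall_lt_rat_imp_le fun r hr => (div_le_iff₀ hc).2 (hgt r hr)
    rw [← le_antisymm hge hle, mul_div_cancel₀ d hc.ne']

section PositiveHom

variable {S : AddSubgroup ℝ} {f : S →+ ℝ} {one : S}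

lemma AddSubgroup.rat_mul_map_one_le_of_rat_lt (hf : ∀ z : S, 0 ≤ (z : ℝ) → 0 ≤ f z)
    (hone : (one : ℝ) = 1) {z : S} {r : ℚ} (hr : (r : ℝ) < z) : r * f one ≤ f z := by
  have hd : (0 : ℝ) < r.den := by exact_mod_cast r.pos
  have hnum : (r.num : ℝ) = r.den * r := by rw [Rat.cast_def]; field_simp
  have hpos := hf (r.den • z - r.num • one) (by
    push_cast [zsmul_eq_mul, nsmul_eq_mul, hone, hnum]
    nlinarith)
  rw [map_sub, map_zsmul, map_nsmul, nsmul_eq_mul, zsmul_eq_mul, hnum] at hpos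
  nlinarith

lemma AddSubgroup.map_eq_map_one_mul (hf : ∀ z : S, 0 ≤ (z : ℝ) → 0 ≤ f z)
    (hone : (one : ℝ) = 1) (z : S) : f z = f one * z := by
  refine eq_mul_of_rat_bounds (hf one (by simp [hone]))
    (fun r hr => rat_mul_map_one_le_of_rat_lt hf hone hr) fun r hr => ?_
  have := rat_mul_map_one_le_of_rat_lt hf hone (z := -z) (r := -r)
    (by push_cast; linarith)
  push_cast [map_neg] at this
  linarith

end PositiveHom

lemma exists_int_eq_of_mem_closure_of_mul_mem_closure {θ c : ℝ}
    (hquad : ∀ a b c : ℤ, (a : ℝ) * θ ^ 2 + (b : ℝ) * θ + (c : ℝ) = 0 → a = 0 ∧ b = 0 ∧ c = 0)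
    (hc : c ∈ AddSubgroup.closure ({1, θ} : Set ℝ))
    (hcθ : c * θ ∈ AddSubgroup.closure ({1, θ} : Set ℝ)) :
    ∃ n : ℤ, c = n := by
  obtain ⟨p, q, rfl⟩ := AddSubgroup.mem_closure_pair.1 hc
  obtain ⟨m, n, hmn⟩ := AddSubgroup.mem_closure_pair.1 hcθ
  simp only [zsmul_eq_mul, mul_one] at hmn
  obtain ⟨rfl, -, -⟩ := hquad q (p - n) (-m) (by push_cast; linear_combination -hmn)
  exact ⟨p, by simp⟩

theorem positive_hom_factor_is_nat_of_nonquadratic_general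
    (θ : ℝ)
    (hquad : ∀ a b c : ℤ, (a : ℝ) * θ ^ 2 + (b : ℝ) * θ + (c : ℝ) = 0 → a = 0 ∧ b = 0 ∧ c = 0)
    (S : AddSubgroup ℝ) (hS : S = AddSubgroup.closure ({1, θ} : Set ℝ))
    (h : S →+ S)
    (hpos : ∀ z : S, 0 ≤ (z : ℝ) → 0 ≤ (h z : ℝ))
    (one : S) (hone : (one : ℝ) = 1) :
    ∃ n : ℕ, (h one : ℝ) = n := by
  let t : S := ⟨θ, hS ▸ AddSubgroup.subset_closure (by simp)⟩
  have hht : (h t : ℝ) = h one * θ :=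
    AddSubgroup.map_eq_map_one_mul (f := S.subtype.comp h) hpos hone t
  obtain ⟨n, hn⟩ := exists_int_eq_of_mem_closure_of_mul_mem_closure hquad
    (by rw [← hS]; exact (h one).2) (by rw [← hS, ← hht]; exact (h t).2)
  have hn0 : 0 ≤ n := by exact_mod_cast hn ▸ hpos one (by simp [hone])
  exact ⟨n.toNat, by rw [hn, ← Int.toNat_of_nonneg hn0]; rfl⟩

/-- **Remark 6.2.** If `θ` is irrational and non-quadratic, then for every positive additive
group homomorphism `h` of `S = ℤ + θℤ` the factor `h 1` is a nonnegative integer. -/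
theorem positive_hom_factor_is_nat_of_nonquadratic
    (θ : ℝ) (hirr : Irrational θ)
    (hquad : ∀ a b c : ℤ, (a : ℝ) * θ ^ 2 + (b : ℝ) * θ + (c : ℝ) = 0 → a = 0 ∧ b = 0 ∧ c = 0)
    (S : AddSubgroup ℝ) (hS : S = AddSubgroup.closure ({1, θ} : Set ℝ))
    (h : S →+ S)
    (hpos : ∀ z : S, 0 ≤ (z : ℝ) → 0 ≤ (h z : ℝ))
    (one : S) (hone : (one : ℝ) = 1) :
    ∃ n : ℕ, (h one : ℝ) = n :=
  positive_hom_factor_is_nat_of_nonquadratic_general θ hquad S hS h hpos one hone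
end

section
/- Let G be a finite group. Consider the subring R of the ring of functions G → ℂ (with pointwise operations) generated by the characters of all finite-dimensional complex representations of G. Let r : R → ℂ be a ring homomorphism such that for every irreducible (simple) finite-dimensional complex representation V of G, r(χ_V) is a real number with r(χ_V) > 0. Then for every finite-dimensional complex representation V of G, r(χ_V) = dim V. -/
/-!
Since the character of the regular representation vanishes off the identity,
`χ_V · χ_reg = dim V · χ_reg` for every representation `V`. Applying `r` and cancelling
`r(χ_reg)` gives the claim, provided `r(χ_reg) ≠ 0`. By Maschke's theorem `χ_reg` is a
nonempty sum of characters of simple representations, so `r(χ_reg)` is a positive real.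
-/

open CategoryTheory Limits Module

universe u

theorem LinearMap.trace_eq_add_of_add_eq_id {R M N P : Type*} [CommRing R]
    [AddCommGroup M] [Module R M] [Module.Free R M] [Module.Finite R M]
    [AddCommGroup N] [Module R N] [Module.Free R N] [Module.Finite R N]
    [AddCommGroup P] [Module R P] [Module.Free R P] [Module.Finite R P]
    {i : N →ₗ[R] M} {r : M →ₗ[R] N} {j : P →ₗ[R] M} {p : M →ₗ[R] P}
    (hid : i ∘ₗ r + j ∘ₗ p = LinearMap.id) (f : M →ₗ[R] M) :
    trace R M f = trace R N (r ∘ₗ f ∘ₗ i) + trace R P (p ∘ₗ f ∘ₗ j) := by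
  conv_lhs => rw [← LinearMap.comp_id f, ← hid]
  rw [LinearMap.comp_add, map_add, ← LinearMap.comp_assoc, ← LinearMap.comp_assoc,
    trace_comp_comm', trace_comp_comm' (f ∘ₗ j)]

namespace FDRep

section Field

variable {k G : Type u} [Field k] [Group G]

lemma hom_comp {U V W : FDRep k G} (f : U ⟶ V) (g : V ⟶ W) :
    (f ≫ g).hom.hom.hom = g.hom.hom.hom ∘ₗ f.hom.hom.hom := rfl

lemma hom_id (V : FDRep k G) : (𝟙 V : V ⟶ V).hom.hom.hom = LinearMap.id := rfl

lemma hom_add {V W : FDRep k G} (f g : V ⟶ W) :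
    (f + g).hom.hom.hom = f.hom.hom.hom + g.hom.hom.hom := rfl

lemma hom_comp_ρ {V W : FDRep k G} (f : V ⟶ W) (g : G) :
    f.hom.hom.hom ∘ₗ V.ρ g = W.ρ g ∘ₗ f.hom.hom.hom := by
  ext v
  exact ConcreteCategory.congr_hom (f.comm g) v

theorem character_eq_add_of_splitting {S : ShortComplex (FDRep k G)} (s : S.Splitting) :
    S.X₂.character = S.X₁.character + S.X₃.character := by
  have hid := congrArg (fun φ => φ.hom.hom.hom) s.id
  simp only [hom_add, hom_comp, hom_id] at hid
  funext g
  have h₁ : s.r.hom.hom.hom ∘ₗ S.X₂.ρ g ∘ₗ S.f.hom.hom.hom = S.X₁.ρ g := by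
    rw [← hom_comp_ρ, ← LinearMap.comp_assoc, ← hom_comp, s.f_r, hom_id, LinearMap.id_comp]
  have h₃ : S.g.hom.hom.hom ∘ₗ S.X₂.ρ g ∘ₗ s.s.hom.hom.hom = S.X₃.ρ g := by
    rw [← hom_comp_ρ, ← LinearMap.comp_assoc, ← hom_comp, s.s_g, hom_id, LinearMap.id_comp]
  rw [Pi.add_apply, character, LinearMap.trace_eq_add_of_add_eq_id hid, h₁, h₃]
  rfl

theorem isZero_iff_subsingleton (V : FDRep k G) : IsZero V ↔ Subsingleton V := by
  rw [IsZero.iff_id_eq_zero]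
  refine ⟨fun h => subsingleton_of_forall_eq 0 fun v => ?_, fun _ => ?_⟩
  · simpa using LinearMap.congr_fun (congrArg (fun φ : V ⟶ V => φ.hom.hom.hom) h) v
  · ext v
    exact Subsingleton.elim _ _

lemma character_eq_zero_of_isZero {V : FDRep k G} (hV : IsZero V) : V.character = 0 := by
  have := (isZero_iff_subsingleton V).mp hV
  funext g
  simp [character, Subsingleton.elim (V.ρ g) 0]

lemma finrank_ne_zero_of_not_isZero {V : FDRep k G} (hV : ¬IsZero V) : finrank k V ≠ 0 := by
  rwa [Ne, finrank_zero_iff, ← isZero_iff_subsingleton]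

variable [Finite G]

theorem exists_character_eq_add_of_not_simple [NeZero (Nat.card G : k)] {V : FDRep k G}
    (hV₀ : ¬IsZero V) (hVs : ¬Simple V) :
    ∃ Y Q : FDRep k G, ¬IsZero Y ∧ ¬IsZero Q ∧ V.character = Y.character + Q.character := by
  have : ¬∀ {Y : FDRep k G} (f : Y ⟶ V) [Mono f], IsIso f ↔ f ≠ 0 := fun h => hVs ⟨h⟩
  push Not at this
  obtain ⟨Y, f, _, hiff⟩ := this
  rcases hiff with ⟨hiso, rfl⟩ | ⟨hniso, hf0⟩
  · exact absurd ((isIsoZero_iff_source_target_isZero Y V).mp hiso).2 hV₀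
  -- Maschke's theorem, in the form "every object of `FDRep k G` is injective", splits `f`.
  obtain ⟨r, hr⟩ : ∃ r : V ⟶ Y, f ≫ r = 𝟙 Y :=
    ⟨Injective.factorThru (𝟙 Y) f, Injective.comp_factorThru _ _⟩
  let s := ShortComplex.Splitting.ofExactOfRetraction _ (ShortComplex.cokernelSequence_exact f)
    r hr inferInstance
  refine ⟨Y, cokernel f, fun hY => hf0 (hY.eq_of_src _ _), fun hQ => hniso ?_,
    character_eq_add_of_splitting s⟩
  have := Abelian.epi_of_cokernel_π_eq_zero f (hQ.eq_of_tgt _ _)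
  exact isIso_of_mono_of_epi f

theorem exists_list_simple_character_eq_sum [CharZero k] (V : FDRep k G) :
    ∃ l : List (FDRep k G), (∀ W ∈ l, Simple W) ∧ V.character = (l.map character).sum := by
  induction h : finrank k V using Nat.strong_induction_on generalizing V with
  | _ n ih =>
  by_cases hV₀ : IsZero V
  · exact ⟨[], by simp, by simp [character_eq_zero_of_isZero hV₀]⟩
  by_cases hVs : Simple V
  · exact ⟨[V], by simpa using hVs, by simp⟩
  obtain ⟨Y, Q, hY, hQ, hchar⟩ := exists_character_eq_add_of_not_simple hV₀ hVs
  have hdim : finrank k V = finrank k Y + finrank k Q := by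
    have h₁ := congrFun hchar 1
    simp only [Pi.add_apply, char_one] at h₁
    exact_mod_cast h₁
  obtain ⟨lY, hlY, hcY⟩ := ih _ (by have := finrank_ne_zero_of_not_isZero hQ; omega) Y rfl
  obtain ⟨lQ, hlQ, hcQ⟩ := ih _ (by have := finrank_ne_zero_of_not_isZero hY; omega) Q rfl
  refine ⟨lY ++ lQ, fun W hW => ?_, by simp [hchar, hcY, hcQ]⟩
  rcases List.mem_append.mp hW with hW | hW
  exacts [hlY W hW, hlQ W hW]

variable (k G) in
noncomputable abbrev leftRegular : FDRep k G := FDRep.of (Representation.leftRegular k G)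

theorem character_leftRegular_of_ne_one {g : G} (hg : g ≠ 1) :
    (leftRegular k G).character g = 0 := by
  classical
  have := Fintype.ofFinite G
  rw [character, LinearMap.trace_eq_matrix_trace k (MonoidAlgebra.basis G k), Matrix.trace]
  refine Finset.sum_eq_zero fun h _ => ?_
  simp [LinearMap.toMatrix_apply, MonoidAlgebra.basis, hg]

theorem character_mul_character_leftRegular (V : FDRep k G) :
    V.character * (leftRegular k G).character =
      (finrank k V : G → k) * (leftRegular k G).character := by
  funext g
  by_cases hg : g = 1
  · simp [hg, char_one]
  · simp [character_leftRegular_of_ne_one hg]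

end Field

open scoped ComplexOrder in
theorem ringHom_character_pos {G : Type} [Group G] [Finite G] {R : Subring (G → ℂ)}
    (hmem : ∀ V : FDRep ℂ G, V.character ∈ R) (r : R →+* ℂ)
    (hpos : ∀ V : FDRep ℂ G, Simple V → 0 < r ⟨V.character, hmem V⟩)
    {V : FDRep ℂ G} (hV : ¬IsZero V) : 0 < r ⟨V.character, hmem V⟩ := by
  obtain ⟨l, hl, hchar⟩ := exists_list_simple_character_eq_sum V
  have hl₀ : l ≠ [] := by
    rintro rfl
    refine finrank_ne_zero_of_not_isZero hV ((Nat.cast_eq_zero (R := ℂ)).mp ?_)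
    simpa [char_one] using congrFun hchar 1
  have hsum : (⟨V.character, hmem V⟩ : R) = (l.map fun W => ⟨W.character, hmem W⟩).sum := by
    ext1
    simp [hchar, Function.comp_def]
  rw [hsum, map_list_sum, List.map_map]
  exact List.sum_pos _ (by simpa using fun W hW => hpos W (hl W hW)) (by simpa using hl₀)

end FDRep

theorem ringHom_on_character_ring_eq_dim_general
    {G : Type} [Group G] [Fintype G]
    (R : Subring (G → ℂ))
    (hmem : ∀ V : FDRep ℂ G, V.character ∈ R)
    (r : R →+* ℂ)
    (hpos : ∀ V : FDRep ℂ G, Simple V →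
      ∃ x : ℝ, 0 < x ∧ r ⟨V.character, hmem V⟩ = (x : ℂ)) :
    ∀ V : FDRep ℂ G, r ⟨V.character, hmem V⟩ = (Module.finrank ℂ V : ℂ) := by
  intro V
  have hreg : r ⟨(FDRep.leftRegular ℂ G).character, hmem _⟩ ≠ 0 := by
    open scoped ComplexOrder in
    refine (FDRep.ringHom_character_pos hmem r (fun W hW => ?_) ?_).ne'
    · obtain ⟨x, hx, hrx⟩ := hpos W hW
      exact hrx ▸ Complex.zero_lt_real.mpr hx
    · exact (FDRep.isZero_iff_subsingleton _).not.mpr (not_subsingleton _)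
  have key : (⟨V.character, hmem V⟩ : R) * ⟨(FDRep.leftRegular ℂ G).character, hmem _⟩ =
      (Module.finrank ℂ V : R) * ⟨(FDRep.leftRegular ℂ G).character, hmem _⟩ :=
    Subtype.ext (by simpa using FDRep.character_mul_character_leftRegular V)
  have hr := congrArg r key
  rw [map_mul, map_mul, map_natCast] at hr
  exact mul_right_cancel₀ hreg hr

/-- **Lemma 6.3 (classical case).** Let `G` be a finite group and `R` the subring of the
ring of functions `G → ℂ` generated by the characters of all finite-dimensional complex
representations of `G`. If `r : R → ℂ` is a ring homomorphism that takes a positive real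
value on the character of every irreducible representation, then `r` sends the character
of every finite-dimensional representation `V` to `dim V`. -/
theorem ringHom_on_character_ring_eq_dim
    {G : Type} [Group G] [Fintype G]
    (R : Subring (G → ℂ))
    (hR : R = Subring.closure (Set.range fun V : FDRep ℂ G => V.character))
    (hmem : ∀ V : FDRep ℂ G, V.character ∈ R)
    (r : R →+* ℂ)
    (hpos : ∀ V : FDRep ℂ G, Simple V →
      ∃ x : ℝ, 0 < x ∧ r ⟨V.character, hmem V⟩ = (x : ℂ)) :
    ∀ V : FDRep ℂ G, r ⟨V.character, hmem V⟩ = (Module.finrank ℂ V : ℂ) :=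
  ringHom_on_character_ring_eq_dim_general R hmem r hpos
end
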